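/- arXiv:1212.6696 — 2 statements merged into one kernel-verified Lean document; each statement's English description precedes it below -/
import Mathlib

section
/- Let f₁, f₂ ∈ ℝ[x₁,…,xₙ] be homogeneous polynomials, both hyperbolic with respect to e ∈ ℝⁿ, and let h ∈ ℝ[x₁,…,xₙ] be homogeneous of degree deg(f₂) − 1. Then f₁·h interlaces f₁·f₂ with respect to e if and only if h interlaces f₂ with respect to e. -/
open Filter Topology

/-- The restriction of a multivariate polynomial to the line `t ↦ t•e + a`,
as a univariate polynomial in `t`. -/
noncomputable def lineRestrict {n : ℕ} (f : MvPolynomial (Fin n) ℝ) (e a : Fin n → ℝ) :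
    Polynomial ℝ :=
  MvPolynomial.aeval (fun i => Polynomial.C (a i) + Polynomial.C (e i) * Polynomial.X) f

/-- A univariate real polynomial has only real zeros: every complex root is real. -/
def RealRooted (p : Polynomial ℝ) : Prop :=
  ∀ z : ℂ, Polynomial.aeval z p = 0 → z.im = 0

/-- `f` is hyperbolic with respect to `e`: `f(e) ≠ 0` and for every `a`,
all roots of `t ↦ f(t•e + a)` are real. -/
def IsHyperbolic {n : ℕ} (f : MvPolynomial (Fin n) ℝ) (e : Fin n → ℝ) : Prop :=
  MvPolynomial.eval e f ≠ 0 ∧ ∀ a : Fin n → ℝ, RealRooted (lineRestrict f e a)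

/-- The roots of a univariate real polynomial, sorted increasingly (with multiplicity). -/
noncomputable def sortedRoots (p : Polynomial ℝ) : List ℝ :=
  p.roots.sort (· ≤ ·)

/-- `q` interlaces `p` (univariate): both have only real roots, `deg q = deg p − 1`,
and with roots `α₁ ≤ … ≤ α_d` of `p`, `β₁ ≤ … ≤ β_{d-1}` of `q`,
one has `α_i ≤ β_i ≤ α_{i+1}`. -/
def InterlacesU (q p : Polynomial ℝ) : Prop :=
  RealRooted p ∧ RealRooted q ∧ q.natDegree + 1 = p.natDegree ∧
    ∀ i : ℕ, i + 1 < (sortedRoots p).length →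
      (sortedRoots p).getD i 0 ≤ (sortedRoots q).getD i 0 ∧
        (sortedRoots q).getD i 0 ≤ (sortedRoots p).getD (i + 1) 0

/-- `q` strictly interlaces `p` (univariate): all interlacing inequalities are strict. -/
def StrictInterlacesU (q p : Polynomial ℝ) : Prop :=
  RealRooted p ∧ RealRooted q ∧ q.natDegree + 1 = p.natDegree ∧
    ∀ i : ℕ, i + 1 < (sortedRoots p).length →
      (sortedRoots p).getD i 0 < (sortedRoots q).getD i 0 ∧
        (sortedRoots q).getD i 0 < (sortedRoots p).getD (i + 1) 0

/-- `g` interlaces `f` with respect to `e`: `g(t•e+a)` interlaces `f(t•e+a)` for every `a`. -/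
def Interlaces {n : ℕ} (g f : MvPolynomial (Fin n) ℝ) (e : Fin n → ℝ) : Prop :=
  ∀ a : Fin n → ℝ, InterlacesU (lineRestrict g e a) (lineRestrict f e a)

/-- `g` strictly interlaces `f` with respect to `e`: `g(t•e+a)` strictly interlaces
`f(t•e+a)` for all `a` in a nonempty Zariski-open subset of `ℝⁿ`. -/
def StrictInterlaces {n : ℕ} (g f : MvPolynomial (Fin n) ℝ) (e : Fin n → ℝ) : Prop :=
  ∃ p : MvPolynomial (Fin n) ℝ, p ≠ 0 ∧ ∀ a : Fin n → ℝ, MvPolynomial.eval a p ≠ 0 →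
    StrictInterlacesU (lineRestrict g e a) (lineRestrict f e a)

/-- The hyperbolicity cone `C(f,e)`: the connected component of `e` in `ℝⁿ \ V_ℝ(f)`. -/
def hypCone {n : ℕ} (f : MvPolynomial (Fin n) ℝ) (e : Fin n → ℝ) : Set (Fin n → ℝ) :=
  connectedComponentIn {x | MvPolynomial.eval x f ≠ 0} e

/-- The directional derivative `D_e f = Σᵢ eᵢ ∂f/∂xᵢ`. -/
noncomputable def Dd {n : ℕ} (e : Fin n → ℝ) (f : MvPolynomial (Fin n) ℝ) :
    MvPolynomial (Fin n) ℝ :=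
  ∑ i, MvPolynomial.C (e i) * MvPolynomial.pderiv i f

/-- `Int(f,e)`: homogeneous polynomials of degree `d−1` interlacing `f` (of degree `d`)
with respect to `e` and positive at `e`. -/
def IntCone {n : ℕ} (f : MvPolynomial (Fin n) ℝ) (e : Fin n → ℝ) (d : ℕ) :
    Set (MvPolynomial (Fin n) ℝ) :=
  {g | g.IsHomogeneous (d - 1) ∧ Interlaces g f e ∧ 0 < MvPolynomial.eval e g}

/-- The Wronskian polynomial `Δ_{e,a} f = D_e f · D_a f − f · D_e D_a f`. -/
noncomputable def Wron {n : ℕ} (e a : Fin n → ℝ) (f : MvPolynomial (Fin n) ℝ) :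
    MvPolynomial (Fin n) ℝ :=
  Dd e f * Dd a f - f * Dd e (Dd a f)

/-- A polynomial is a sum of squares of polynomials. -/
def IsSOS {n : ℕ} (p : MvPolynomial (Fin n) ℝ) : Prop :=
  ∃ (k : ℕ) (g : Fin k → MvPolynomial (Fin n) ℝ), p = ∑ i, (g i) ^ 2

/-- The matrix pencil `M(x) = x₁M₁ + … + xₙMₙ` as a matrix of polynomials. -/
noncomputable def pencil {n d : ℕ} (M : Fin n → Matrix (Fin d) (Fin d) ℝ) :
    Matrix (Fin d) (Fin d) (MvPolynomial (Fin n) ℝ) :=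
  Matrix.of fun i j => ∑ k, MvPolynomial.C (M k i j) * MvPolynomial.X k

/-- `Δ_{ij} f = (∂f/∂xᵢ)(∂f/∂xⱼ) − f·(∂²f/∂xᵢ∂xⱼ)`. -/
noncomputable def Dij {n : ℕ} (i j : Fin n) (f : MvPolynomial (Fin n) ℝ) :
    MvPolynomial (Fin n) ℝ :=
  MvPolynomial.pderiv i f * MvPolynomial.pderiv j f -
    f * MvPolynomial.pderiv i (MvPolynomial.pderiv j f)

/-- `f` is stable: `f(μ) ≠ 0` whenever every coordinate of `μ` has positive imaginary part. -/
def IsStable {n : ℕ} (f : MvPolynomial (Fin n) ℝ) : Prop :=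
  ∀ μ : Fin n → ℂ, (∀ i, 0 < (μ i).im) → MvPolynomial.aeval μ f ≠ 0

/-!
For a real-rooted `q` with `deg q + 1 = deg p`, the index inequalities defining "`q` interlaces
`p`" are equivalent to the counting inequalities `N_q(t) ≤ N_p(t) ≤ N_q(t) + 1` for all real `t`,
where `N_p(t)` is the number of roots of `p` that are `≤ t`. Root counts add under
multiplication, so on every line `t ↦ t•e + a` the real-rooted common factor `f₁(t•e + a)` cancels.
-/

namespace List

variable {α : Type*} [LinearOrder α]

theorem Pairwise.lt_countP_le_iff {L : List α} (hL : L.Pairwise (· ≤ ·)) (d t : α) {i : ℕ} :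
    i < L.countP (· ≤ t) ↔ i < L.length ∧ L.getD i d ≤ t := by
  induction L generalizing i with
  | nil => simp
  | cons a L ih =>
    obtain ⟨ha, hL⟩ := pairwise_cons.mp hL
    by_cases hat : a ≤ t
    · cases i <;> simp [hat, ih hL]
    · have hgt : ∀ b ∈ L, ¬ b ≤ t := fun b hb hbt => hat ((ha b hb).trans hbt)
      rw [countP_cons, countP_eq_zero.mpr (by simpa using hgt)]
      cases i with
      | zero => simp [hat]
      | succ j =>
        simp only [hat, decide_false, length_cons, getD_cons_succ]
        refine ⟨by simp, fun ⟨hj, hjt⟩ => ?_⟩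
        rw [getD_eq_getElem _ _ (by omega : j < L.length)] at hjt
        exact (hgt _ (getElem_mem _) hjt).elim

theorem interlace_iff_countP {L K : List α} (hL : L.Pairwise (· ≤ ·)) (hK : K.Pairwise (· ≤ ·))
    (hlen : L.length = K.length + 1) (d : α) :
    (∀ i, i + 1 < L.length → L.getD i d ≤ K.getD i d ∧ K.getD i d ≤ L.getD (i + 1) d) ↔
      ∀ t, K.countP (· ≤ t) ≤ L.countP (· ≤ t) ∧ L.countP (· ≤ t) ≤ K.countP (· ≤ t) + 1 := by
  constructor
  · intro H t
    constructor
    · by_contra! hlt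
      obtain ⟨hi, hKi⟩ := (hK.lt_countP_le_iff d t).1 hlt
      exact lt_irrefl _ <| (hL.lt_countP_le_iff d t).2 ⟨by omega, (H _ (by omega)).1.trans hKi⟩
    · by_contra! hlt
      obtain ⟨hi, hLi⟩ := (hL.lt_countP_le_iff d t).1 hlt
      exact lt_irrefl _ <| (hK.lt_countP_le_iff d t).2 ⟨by omega, (H _ hi).2.trans hLi⟩
  · intro H i hi
    constructor
    · have hKi := (hK.lt_countP_le_iff d (K.getD i d)).2 ⟨by omega, le_rfl⟩
      exact ((hL.lt_countP_le_iff d _).1 (hKi.trans_le (H _).1)).2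
    · have hLi := (hL.lt_countP_le_iff d (L.getD (i + 1) d)).2 ⟨hi, le_rfl⟩
      exact ((hK.lt_countP_le_iff d _).1 (Nat.succ_lt_succ_iff.mp (hLi.trans_le (H _).2))).2

end List

lemma RealRooted.ne_zero {p : Polynomial ℝ} (hp : RealRooted p) : p ≠ 0 := by
  rintro rfl
  simpa using hp Complex.I (by simp)

lemma realRooted_mul_iff {p q : Polynomial ℝ} :
    RealRooted (p * q) ↔ RealRooted p ∧ RealRooted q := by
  simp only [RealRooted, map_mul, mul_eq_zero]
  exact ⟨fun h => ⟨fun z hz => h z (.inl hz), fun z hz => h z (.inr hz)⟩,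
    fun h z hz => hz.elim (h.1 z) (h.2 z)⟩

lemma RealRooted.splits {p : Polynomial ℝ} (hp : RealRooted p) : p.Splits := by
  refine (IsAlgClosed.splits (p.map (algebraMap ℝ ℂ))).of_splits_map _ fun z hz => ?_
  have hz : Polynomial.aeval z p = 0 := (Polynomial.mem_aroots.mp hz).2
  exact ⟨z.re, Complex.ext (by simp) (by simp [hp z hz])⟩

lemma RealRooted.length_sortedRoots {p : Polynomial ℝ} (hp : RealRooted p) :
    (sortedRoots p).length = p.natDegree := by
  rw [sortedRoots, Multiset.length_sort, Polynomial.splits_iff_card_roots.mp hp.splits]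

lemma countP_sortedRoots (p : Polynomial ℝ) (t : ℝ) :
    (sortedRoots p).countP (· ≤ t) = p.roots.countP (· ≤ t) := by
  rw [← Multiset.coe_countP, sortedRoots, Multiset.sort_eq]

theorem interlacesU_iff_countP {q p : Polynomial ℝ} :
    InterlacesU q p ↔ RealRooted p ∧ RealRooted q ∧ q.natDegree + 1 = p.natDegree ∧
      ∀ t, q.roots.countP (· ≤ t) ≤ p.roots.countP (· ≤ t) ∧
        p.roots.countP (· ≤ t) ≤ q.roots.countP (· ≤ t) + 1 := by
  refine and_congr_right fun hp => and_congr_right fun hq => and_congr_right fun hdeg => ?_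
  simp only [← countP_sortedRoots]
  exact List.interlace_iff_countP (L := sortedRoots p) (K := sortedRoots q)
    (Multiset.pairwise_sort _ _) (Multiset.pairwise_sort _ _)
    (by rw [hp.length_sortedRoots, hq.length_sortedRoots, hdeg]) 0

theorem interlacesU_mul_left_iff {p q r : Polynomial ℝ} (hp : RealRooted p) :
    InterlacesU (p * q) (p * r) ↔ InterlacesU q r := by
  simp only [interlacesU_iff_countP, realRooted_mul_iff, hp, true_and]
  refine and_congr_right fun hr => and_congr_right fun hq => ?_
  simp only [Polynomial.natDegree_mul hp.ne_zero hq.ne_zero,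
    Polynomial.natDegree_mul hp.ne_zero hr.ne_zero,
    Polynomial.roots_mul (mul_ne_zero hp.ne_zero hq.ne_zero),
    Polynomial.roots_mul (mul_ne_zero hp.ne_zero hr.ne_zero), Multiset.countP_add, add_assoc,
    add_right_inj, add_le_add_iff_left]

lemma lineRestrict_mul {n : ℕ} (f g : MvPolynomial (Fin n) ℝ) (e a : Fin n → ℝ) :
    lineRestrict (f * g) e a = lineRestrict f e a * lineRestrict g e a :=
  map_mul _ f g

theorem interlaces_mul_left_iff_general {n : ℕ} (f₁ f₂ h : MvPolynomial (Fin n) ℝ)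
    (e : Fin n → ℝ) (hyp₁ : IsHyperbolic f₁ e) :
    Interlaces (f₁ * h) (f₁ * f₂) e ↔ Interlaces h f₂ e := by
  simp only [Interlaces, lineRestrict_mul]
  exact forall_congr' fun a => interlacesU_mul_left_iff (hyp₁.2 a)

/-- Lemma 2.3(b): `f₁·h` interlaces `f₁·f₂` iff `h` interlaces `f₂`. -/
theorem interlaces_mul_left_iff {n d₁ d₂ : ℕ} (f₁ f₂ h : MvPolynomial (Fin n) ℝ)
    (e : Fin n → ℝ) (hf₁ : f₁.IsHomogeneous d₁) (hf₂ : f₂.IsHomogeneous d₂)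
    (hyp₁ : IsHyperbolic f₁ e) (hyp₂ : IsHyperbolic f₂ e)
    (hh : h.IsHomogeneous (d₂ - 1)) :
    Interlaces (f₁ * h) (f₁ * f₂) e ↔ Interlaces h f₂ e :=
  interlaces_mul_left_iff_general f₁ f₂ h e hyp₁
end

section
/- Let M₁,…,Mₙ be real symmetric d×d matrices, M(x) = x₁M₁ + … + xₙMₙ, and f = det(M(x)) ∈ ℝ[x₁,…,xₙ]. If e, a ∈ ℝⁿ are such that M(e) and M(a) are both positive semidefinite, then Δ_{e,a} f = D_e f · D_a f − f · D_e D_a f is a sum of squares of polynomials in ℝ[x₁,…,xₙ]. -/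
open Filter Topology

/-! With `B = adj M(x)`, Jacobi's formula gives `D_e f = tr(B M(e))`, and differentiating
`B M(x) = f I` gives `f · D_e B = D_e f · B − B M(e) B`. Hence `Δ_{e,a} f = tr(B M(e) B M(a))`.
Writing `M(e) = PᵀP`, `M(a) = QᵀQ` and using that `B` is symmetric, this is `tr(GᵀG)` for
`G = P B Qᵀ`, the sum of the squares of the entries of `G`. -/

open Matrix Finset

theorem Derivation.leibniz_prod {S A M ι : Type*} [CommRing S] [CommRing A] [Algebra S A]
    [AddCommGroup M] [Module A M] [Module S M] [DecidableEq ι] (D : Derivation S A M)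
    (s : Finset ι) (f : ι → A) :
    D (∏ i ∈ s, f i) = ∑ i ∈ s, (∏ j ∈ s.erase i, f j) • D (f i) := by
  induction s using Finset.induction_on with
  | empty => simp
  | insert a s ha ih =>
    rw [prod_insert ha, leibniz, ih, sum_insert ha, erase_insert ha, smul_sum, add_comm]
    congr 1
    refine sum_congr rfl fun i hi => ?_
    rw [erase_insert_of_ne (ne_of_mem_of_not_mem hi ha).symm,
      prod_insert fun h => ha (mem_of_mem_erase h), mul_smul]

section DerivationMatrix

variable {S R : Type*} [CommRing S] [CommRing R] [Algebra S R]

theorem Matrix.map_mul_derivation {l m p : Type*} [Fintype m] (D : Derivation S R R)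
    (X : Matrix l m R) (Y : Matrix m p R) :
    (X * Y).map D = X.map D * Y + X * Y.map D := by
  ext i j
  simp only [map_apply, mul_apply, add_apply, map_sum, D.leibniz, smul_eq_mul, ← sum_add_distrib]
  exact sum_congr rfl fun k _ => by ring

variable {ι : Type*} [Fintype ι] [DecidableEq ι]

theorem Matrix.det_updateCol_eq_sum (N : Matrix ι ι R) (j : ι) (c : ι → R) :
    (N.updateCol j c).det =
      ∑ σ : Equiv.Perm ι, Equiv.Perm.sign σ • ((∏ i ∈ univ.erase j, N (σ i) i) * c (σ j)) := by
  rw [det_apply]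
  refine sum_congr rfl fun σ _ => ?_
  rw [← mul_prod_erase univ _ (mem_univ j), updateCol_self, mul_comm]
  congr 2
  exact prod_congr rfl fun i hi => updateCol_ne (ne_of_mem_erase hi)

theorem Derivation.map_det (D : Derivation S R R) (N : Matrix ι ι R) :
    D N.det = (N.adjugate * N.map D).trace := by
  calc D N.det = ∑ j, (N.updateCol j fun i => D (N i j)).det := by
        simp_rw [det_updateCol_eq_sum, det_apply, map_sum, map_zsmul_unit, D.leibniz_prod,
          smul_eq_mul, smul_sum]
        exact sum_comm
    _ = ∑ j, (N.adjugate *ᵥ fun i => D (N i j)) j := by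
        simp_rw [← cramer_apply, cramer_eq_adjugate_mulVec]
    _ = (N.adjugate * N.map D).trace := by
        simp [trace, mul_apply, mulVec, dotProduct]

theorem Matrix.det_smul_map_adjugate (D : Derivation S R R) (N : Matrix ι ι R) :
    N.det • N.adjugate.map D =
      (N.adjugate * N.map D).trace • N.adjugate - N.adjugate * N.map D * N.adjugate := by
  have hprod : N.adjugate.map D * N + N.adjugate * N.map D =
      (N.adjugate * N.map D).trace • 1 := by
    rw [← map_mul_derivation, adjugate_mul, ← D.map_det, smul_one_eq_diagonal,
      smul_one_eq_diagonal, diagonal_map (map_zero D)]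
  calc N.det • N.adjugate.map D = N.adjugate.map D * (N * N.adjugate) := by
        rw [mul_adjugate, Matrix.mul_smul, Matrix.mul_one]
    _ = (N.adjugate.map D * N + N.adjugate * N.map D) * N.adjugate -
          N.adjugate * N.map D * N.adjugate := by
        rw [add_mul, Matrix.mul_assoc, add_sub_cancel_right]
    _ = _ := by rw [hprod, smul_mul, one_mul]

theorem Matrix.wronskian_det (D₁ D₂ : Derivation S R R) (N : Matrix ι ι R)
    (hconst : ∀ i j, D₁ (D₂ (N i j)) = 0) :
    D₁ N.det * D₂ N.det - N.det * D₁ (D₂ N.det) =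
      (N.adjugate * N.map D₁ * N.adjugate * N.map D₂).trace := by
  have hDD : D₁ (D₂ N.det) = (N.adjugate.map D₁ * N.map D₂).trace := by
    have : (N.map D₂).map D₁ = 0 := by ext i j; exact hconst i j
    rw [D₂.map_det, AddMonoidHom.map_trace, map_mul_derivation, this, Matrix.mul_zero, add_zero]
  rw [hDD, D₁.map_det, D₂.map_det, ← smul_eq_mul (a := N.det), ← trace_smul, ← smul_mul,
    det_smul_map_adjugate, sub_mul, trace_sub, smul_mul, trace_smul, smul_eq_mul]
  ring

end DerivationMatrix

theorem Matrix.PosSemidef.exists_eq_transpose_mul_self {ι : Type*} [Fintype ι] [DecidableEq ι]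
    {A : Matrix ι ι ℝ} (hA : A.PosSemidef) : ∃ P : Matrix ι ι ℝ, A = Pᵀ * P := by
  open scoped MatrixOrder in
  obtain ⟨P, hP⟩ := CStarAlgebra.nonneg_iff_eq_star_mul_self.mp hA.nonneg
  exact ⟨P, by rwa [star_eq_conjTranspose, conjTranspose_eq_transpose_of_trivial] at hP⟩

section SumOfSquares

variable {n : ℕ}

theorem isSOS_sum_sq {ι : Type*} [Fintype ι] (g : ι → MvPolynomial (Fin n) ℝ) :
    IsSOS (∑ i, g i ^ 2) :=
  ⟨Fintype.card ι, g ∘ (Fintype.equivFin ι).symm, (Equiv.sum_comp _ fun i => g i ^ 2).symm⟩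

theorem isSOS_trace_transpose_mul_self {ι κ : Type*} [Fintype ι] [Fintype κ]
    (G : Matrix ι κ (MvPolynomial (Fin n) ℝ)) : IsSOS (Gᵀ * G).trace := by
  have : (Gᵀ * G).trace = ∑ p : ι × κ, G p.1 p.2 ^ 2 := by
    simp only [trace, diag_apply, mul_apply, transpose_apply, sq, Fintype.sum_prod_type]
    exact sum_comm
  rw [this]
  exact isSOS_sum_sq _

theorem isSOS_trace_mul_gram_mul_mul_gram {ι : Type*} [Fintype ι]
    {B : Matrix ι ι (MvPolynomial (Fin n) ℝ)} (hB : Bᵀ = B)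
    (P Q : Matrix ι ι (MvPolynomial (Fin n) ℝ)) :
    IsSOS (B * (Pᵀ * P) * B * (Qᵀ * Q)).trace := by
  have : (B * (Pᵀ * P) * B * (Qᵀ * Q)).trace = ((P * B * Qᵀ)ᵀ * (P * B * Qᵀ)).trace := by
    rw [transpose_mul, transpose_mul, transpose_transpose, hB,
      show B * (Pᵀ * P) * B * (Qᵀ * Q) = B * Pᵀ * P * B * Qᵀ * Q by simp only [Matrix.mul_assoc],
      trace_mul_comm]
    simp only [Matrix.mul_assoc]
  rw [this]
  exact isSOS_trace_transpose_mul_self _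

end SumOfSquares

section Pencil

open MvPolynomial

variable {n d : ℕ}

noncomputable def dirDerivation (e : Fin n → ℝ) :
    Derivation ℝ (MvPolynomial (Fin n) ℝ) (MvPolynomial (Fin n) ℝ) :=
  ∑ i, e i • pderiv i

theorem coe_dirDerivation (e : Fin n → ℝ) : ⇑(dirDerivation e) = Dd e := by
  funext f
  rw [dirDerivation, ← Derivation.coeFnAddMonoidHom_apply, map_sum, Finset.sum_apply]
  simp [Dd, smul_eq_C_mul]

theorem dirDerivation_X (e : Fin n → ℝ) (k : Fin n) : dirDerivation e (X k) = C (e k) := by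
  simp [coe_dirDerivation, Dd, pderiv_X, Pi.single_apply]

theorem pencil_map_dirDerivation (M : Fin n → Matrix (Fin d) (Fin d) ℝ) (e : Fin n → ℝ) :
    (pencil M).map (dirDerivation e) = (∑ k, e k • M k).map C := by
  refine Matrix.ext fun i j => ?_
  simp [pencil, dirDerivation_X, derivation_C, Matrix.sum_apply, mul_comm]

theorem pencil_transpose {M : Fin n → Matrix (Fin d) (Fin d) ℝ} (hsym : ∀ k, (M k).IsSymm) :
    (pencil M)ᵀ = pencil M := by
  refine Matrix.ext fun i j => ?_
  simp only [pencil, transpose_apply, of_apply]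
  exact sum_congr rfl fun k _ => by rw [(hsym k).apply i j]

end Pencil

/-- Theorem 4.2: if `f = det M(x)` with `M(e), M(a) ⪰ 0`, then `Δ_{e,a} f` is a sum of
squares. -/
theorem wron_isSOS_of_detRep {n d : ℕ} (M : Fin n → Matrix (Fin d) (Fin d) ℝ)
    (e a : Fin n → ℝ) (hsym : ∀ k, (M k).IsSymm)
    (he : (∑ k, e k • M k).PosSemidef) (ha : (∑ k, a k • M k).PosSemidef) :
    IsSOS (Wron e a (pencil M).det) := by
  obtain ⟨P, hP⟩ := he.exists_eq_transpose_mul_self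
  obtain ⟨Q, hQ⟩ := ha.exists_eq_transpose_mul_self
  have hconst : ∀ i j, dirDerivation e (dirDerivation a (pencil M i j)) = 0 := fun i j => by
    rw [← map_apply (f := dirDerivation a), pencil_map_dirDerivation, map_apply, MvPolynomial.derivation_C]
  have hadj : (pencil M).adjugateᵀ = (pencil M).adjugate := by
    rw [adjugate_transpose, pencil_transpose hsym]
  rw [Wron, ← coe_dirDerivation, ← coe_dirDerivation, wronskian_det _ _ _ hconst,
    pencil_map_dirDerivation, pencil_map_dirDerivation, hP, hQ, Matrix.map_mul, Matrix.map_mul,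
    transpose_map, transpose_map]
  exact isSOS_trace_mul_gram_mul_mul_gram hadj _ _
end
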